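/- Let P be a symmetric positive definite n×n real matrix, let λ_min and λ_max be its minimal and maximal eigenvalues, and let V(x) = xᵀ P x. Suppose x(t) solves ẋ = f(t,x) with d/dt V(x(t)) ≤ −‖x(t)‖² + 2Lδλ_max ‖x(t)‖ for constants L, δ > 0 whenever V(x(t)) ≥ c_ρ, where c_ρ > λ_max (2Lδλ_max)². Then the sublevel set {x : V(x) ≤ c_ρ} is positively invariant. -/

import Mathlib

/-!
Along the trajectory, `V` can only reach the level `cρ` with negative derivative: on `V ≥ cρ` the
upper quadratic bound gives `λ_max ‖x‖² ≥ cρ > λ_max (2Lδλ_max)²`, so `‖x‖ > 2Lδλ_max` and the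
right-hand side `-‖x‖² + 2Lδλ_max ‖x‖` is negative. A differentiable scalar function whose derivative
is negative on the level `cρ` cannot cross it upwards.
-/

open Matrix Set

theorem le_of_hasDerivAt_neg_on_level {g g' : ℝ → ℝ} {a c : ℝ}
    (hg : ∀ t, HasDerivAt g (g' t) t) (hlevel : ∀ t, a ≤ t → g t = c → g' t < 0)
    (ha : g a ≤ c) : ∀ t ≥ a, g t ≤ c := fun _ hat =>
  image_le_of_deriv_right_lt_deriv_boundary (B := fun _ => c) (B' := fun _ => 0)
    (fun s _ => (hg s).continuousAt.continuousWithinAt) (fun s _ => (hg s).hasDerivWithinAt)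
    ha (fun _ => hasDerivAt_const _ _) (fun s hs => hlevel s hs.1) ⟨hat, le_rfl⟩

theorem neg_add_mul_sqrt_neg_of_sq_lt {a s : ℝ} (h : a ^ 2 < s) : -s + a * √s < 0 := by
  have hs : 0 < s := (sq_nonneg a).trans_lt h
  have ha : a < √s := Real.lt_sqrt_of_sq_lt h
  nlinarith [Real.sq_sqrt hs.le, Real.sqrt_pos.mpr hs]

theorem quadratic_lyapunov_sublevel_invariant_general (n : ℕ) (P : Matrix (Fin n) (Fin n) ℝ)
    (lmin lmax L δ cρ : ℝ) (hlmin : 0 < lmin) (hlmax : lmin ≤ lmax)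
    (hbounds : ∀ v : Fin n → ℝ,
      lmin * (∑ i, (v i) ^ 2) ≤ v ⬝ᵥ P.mulVec v ∧
        v ⬝ᵥ P.mulVec v ≤ lmax * (∑ i, (v i) ^ 2))
    (hcρ : lmax * (2 * L * δ * lmax) ^ 2 < cρ)
    (x : ℝ → (Fin n → ℝ)) (V' : ℝ → ℝ)
    (hx : ∀ t, HasDerivAt (fun s => x s ⬝ᵥ P.mulVec (x s)) (V' t) t)
    (hineq : ∀ t, cρ ≤ x t ⬝ᵥ P.mulVec (x t) →
      V' t ≤ -(∑ i, (x t i) ^ 2) +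
        2 * L * δ * lmax * Real.sqrt (∑ i, (x t i) ^ 2))
    (h0 : x 0 ⬝ᵥ P.mulVec (x 0) ≤ cρ) :
    ∀ t ≥ (0 : ℝ), x t ⬝ᵥ P.mulVec (x t) ≤ cρ := by
  have hlmax_pos : 0 < lmax := hlmin.trans_le hlmax
  refine le_of_hasDerivAt_neg_on_level hx (fun t _ hlevel => ?_) h0
  have hnorm_large : (2 * L * δ * lmax) ^ 2 < ∑ i, (x t i) ^ 2 := by
    refine lt_of_mul_lt_mul_left ?_ hlmax_pos.le
    calc lmax * (2 * L * δ * lmax) ^ 2 < cρ := hcρ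
      _ = x t ⬝ᵥ P.mulVec (x t) := hlevel.symm
      _ ≤ lmax * ∑ i, (x t i) ^ 2 := (hbounds (x t)).2
  exact (hineq t hlevel.ge).trans_lt (neg_add_mul_sqrt_neg_of_sq_lt hnorm_large)

theorem quadratic_lyapunov_sublevel_invariant (n : ℕ) (P : Matrix (Fin n) (Fin n) ℝ)
    (hPsym : P.IsHermitian) (hPdef : P.PosDef)
    (lmin lmax L δ cρ : ℝ) (hlmin : 0 < lmin) (hlmax : lmin ≤ lmax)
    (hL : 0 < L) (hδ : 0 < δ)
    (hbounds : ∀ v : Fin n → ℝ,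
      lmin * (∑ i, (v i) ^ 2) ≤ v ⬝ᵥ P.mulVec v ∧
        v ⬝ᵥ P.mulVec v ≤ lmax * (∑ i, (v i) ^ 2))
    (hcρ : lmax * (2 * L * δ * lmax) ^ 2 < cρ)
    (x : ℝ → (Fin n → ℝ)) (V' : ℝ → ℝ)
    (hx : ∀ t, HasDerivAt (fun s => x s ⬝ᵥ P.mulVec (x s)) (V' t) t)
    (hineq : ∀ t, cρ ≤ x t ⬝ᵥ P.mulVec (x t) →
      V' t ≤ -(∑ i, (x t i) ^ 2) +
        2 * L * δ * lmax * Real.sqrt (∑ i, (x t i) ^ 2))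
    (h0 : x 0 ⬝ᵥ P.mulVec (x 0) ≤ cρ) :
    ∀ t ≥ (0 : ℝ), x t ⬝ᵥ P.mulVec (x t) ≤ cρ :=
  quadratic_lyapunov_sublevel_invariant_general n P lmin lmax L δ cρ hlmin hlmax hbounds hcρ x V' hx
    hineq h0
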